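/- Let μ, ε, γ₂ > 0 with γ₂ > μ, and s ∈ ℝ. For any continuous function g : (-∞, s] → ℝ with sup_{t ≤ s} e^{(μ/ε)(t-s)} |g(t)| =: N < ∞, one has sup_{t ≤ s} e^{(μ/ε)(t-s)} · (1/ε) ∫_{-∞}^t e^{-(γ₂/ε)(t-r)} |g(r)| dr ≤ N/(γ₂ - μ). -/
import Mathlib


open Real Set MeasureTheory Filter intervalIntegral

lemma aux_exp_Iic (c t : ℝ) (hc : 0 < c) :
    IntegrableOn (fun r => Real.exp (c * r)) (Iic t) ∧
      (∫ r in Iic t, Real.exp (c * r)) = Real.exp (c * t) / c := by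
  have hcont : Continuous fun r : ℝ => Real.exp (c * r) :=
    Real.continuous_exp.comp (continuous_const.mul continuous_id)
  have hival : ∀ y : ℝ, (∫ x in y..t, Real.exp (c * x))
      = c⁻¹ * (Real.exp (c * t) - Real.exp (c * y)) := by
    intro y
    have := intervalIntegral.integral_comp_mul_left (fun x => Real.exp x) (a := y) (b := t) hc.ne'
    rw [this, integral_exp]
    simp [smul_eq_mul]
  have hInt : IntegrableOn (fun r => Real.exp (c * r)) (Iic t) := by
    refine integrableOn_Iic_of_intervalIntegral_norm_bounded
      (Real.exp (c * t) / c) t (fun y => (hcont.intervalIntegrable _ _).1) tendsto_id ?_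
    filter_upwards [Iic_mem_atBot t] with y _
    have : (∫ x in y..t, ‖Real.exp (c * x)‖) = c⁻¹ * (Real.exp (c * t) - Real.exp (c * y)) := by
      simp_rw [Real.norm_eq_abs, abs_of_pos (Real.exp_pos _)]
      exact hival y
    rw [id, this, div_eq_inv_mul]
    have := (Real.exp_pos (c * y)).le
    nlinarith [inv_pos.mpr hc]
  refine ⟨hInt, ?_⟩
  have h1 : Tendsto (fun y => ∫ x in y..t, Real.exp (c * x)) atBot
      (nhds (∫ r in Iic t, Real.exp (c * r))) :=
    intervalIntegral_tendsto_integral_Iic _ hInt tendsto_id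
  have h2 : Tendsto (fun y => ∫ x in y..t, Real.exp (c * x)) atBot
      (nhds (Real.exp (c * t) / c)) := by
    simp_rw [hival]
    have hexp : Tendsto (fun y : ℝ => Real.exp (c * y)) atBot (nhds 0) :=
      Real.tendsto_exp_atBot.comp (tendsto_id.const_mul_atBot hc)
    have := ((tendsto_const_nhds (x := Real.exp (c * t)) (f := atBot)).sub hexp).const_mul c⁻¹
    simpa [div_eq_inv_mul] using this
  exact tendsto_nhds_unique h1 h2

theorem stmt_2 (μ ε γ₂ s N : ℝ) (hμ : 0 < μ) (hε : 0 < ε) (hγ₂ : 0 < γ₂)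
    (hμγ₂ : μ < γ₂) (g : ℝ → ℝ) (hg : ContinuousOn g (Iic s))
    (hN : ∀ t ≤ s, Real.exp ((μ / ε) * (t - s)) * |g t| ≤ N) :
    ∀ t ≤ s,
      Real.exp ((μ / ε) * (t - s)) *
          ((1 / ε) * ∫ r in Iic t, Real.exp (-(γ₂ / ε) * (t - r)) * |g r|)
        ≤ N / (γ₂ - μ) := by
  intro t ht
  have hN0 : 0 ≤ N := le_trans (by positivity) (hN s le_rfl)
  set c : ℝ := (γ₂ - μ) / ε with hc_def
  have hc : 0 < c := div_pos (by linarith) hε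
  set K : ℝ := (μ * s - γ₂ * t) / ε with hK_def
  -- the dominating function
  set b : ℝ → ℝ := fun r => N * Real.exp (c * r + K) with hb_def
  have hpt : ∀ r ∈ Iic t, Real.exp (-(γ₂ / ε) * (t - r)) * |g r| ≤ b r := by
    intro r hr
    have hrs : r ≤ s := le_trans hr ht
    have hgr : |g r| ≤ N * Real.exp (-(μ / ε) * (r - s)) := by
      have := hN r hrs
      rw [← le_div_iff₀' (Real.exp_pos _)] at this
      calc |g r| ≤ N / Real.exp ((μ / ε) * (r - s)) := this
        _ = N * Real.exp (-(μ / ε) * (r - s)) := by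
            rw [div_eq_mul_inv, ← Real.exp_neg]; ring_nf
    calc Real.exp (-(γ₂ / ε) * (t - r)) * |g r|
        ≤ Real.exp (-(γ₂ / ε) * (t - r)) * (N * Real.exp (-(μ / ε) * (r - s))) := by
          exact mul_le_mul_of_nonneg_left hgr (Real.exp_pos _).le
      _ = b r := by
          rw [hb_def]
          simp only
          rw [mul_comm (Real.exp _) _, mul_assoc, ← Real.exp_add]
          congr 2
          rw [hc_def, hK_def]
          field_simp
          ring
  have hbInt : IntegrableOn b (Iic t) := by
    have := (aux_exp_Iic c t hc).1
    have h2 : IntegrableOn (fun r => Real.exp (c * r) * (N * Real.exp K)) (Iic t) :=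
      this.mul_const _
    refine h2.congr_fun (fun r _ => ?_) measurableSet_Iic
    rw [hb_def]
    simp only [Real.exp_add]
    ring
  have hmeas : AEStronglyMeasurable (fun r => Real.exp (-(γ₂ / ε) * (t - r)) * |g r|)
      (volume.restrict (Iic t)) := by
    have hgc : ContinuousOn (fun r => |g r|) (Iic t) :=
      (hg.mono (Iic_subset_Iic.mpr ht)).abs
    have : ContinuousOn (fun r => Real.exp (-(γ₂ / ε) * (t - r)) * |g r|) (Iic t) :=
      ((Real.continuous_exp.comp ((continuous_const.mul
        (continuous_const.sub continuous_id)))).continuousOn).mul hgc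
    exact this.aestronglyMeasurable measurableSet_Iic
  have hfInt : IntegrableOn (fun r => Real.exp (-(γ₂ / ε) * (t - r)) * |g r|) (Iic t) := by
    refine MeasureTheory.Integrable.mono hbInt hmeas ?_
    refine (ae_restrict_iff' measurableSet_Iic).2 (ae_of_all _ fun r hr => ?_)
    have h1 : 0 ≤ Real.exp (-(γ₂ / ε) * (t - r)) * |g r| := by positivity
    have h2 : 0 ≤ b r := by rw [hb_def]; positivity
    rw [Real.norm_eq_abs, Real.norm_eq_abs, abs_of_nonneg h1, abs_of_nonneg h2]
    exact hpt r hr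
  have hIle : (∫ r in Iic t, Real.exp (-(γ₂ / ε) * (t - r)) * |g r|) ≤ ∫ r in Iic t, b r :=
    setIntegral_mono_on hfInt hbInt measurableSet_Iic hpt
  have hbval : (∫ r in Iic t, b r) = N * Real.exp K * (Real.exp (c * t) / c) := by
    have hval := (aux_exp_Iic c t hc).2
    calc (∫ r in Iic t, b r) = ∫ r in Iic t, (N * Real.exp K) * Real.exp (c * r) := by
          refine setIntegral_congr_fun measurableSet_Iic (fun r _ => ?_)
          rw [hb_def]; simp only [Real.exp_add]; ring
      _ = (N * Real.exp K) * ∫ r in Iic t, Real.exp (c * r) := MeasureTheory.integral_const_mul _ _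
      _ = N * Real.exp K * (Real.exp (c * t) / c) := by rw [hval]
  have key : Real.exp ((μ / ε) * (t - s)) *
      ((1 / ε) * ∫ r in Iic t, Real.exp (-(γ₂ / ε) * (t - r)) * |g r|)
      ≤ Real.exp ((μ / ε) * (t - s)) * ((1 / ε) * (N * Real.exp K * (Real.exp (c * t) / c))) := by
    rw [← hbval]
    have h1 : 0 < Real.exp ((μ / ε) * (t - s)) := Real.exp_pos _
    have h2 : (0:ℝ) < 1 / ε := by positivity
    exact mul_le_mul_of_nonneg_left (mul_le_mul_of_nonneg_left hIle h2.le) h1.le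
  refine key.trans_eq ?_
  have hexp0 : (μ / ε) * (t - s) + (K + c * t) = 0 := by
    rw [hK_def, hc_def]; field_simp; ring
  have : Real.exp ((μ / ε) * (t - s)) * Real.exp K * Real.exp (c * t) = 1 := by
    rw [← Real.exp_add, ← Real.exp_add, ← Real.exp_zero]
    congr 1
    linarith [hexp0]
  calc Real.exp ((μ / ε) * (t - s)) * ((1 / ε) * (N * Real.exp K * (Real.exp (c * t) / c)))
      = (Real.exp ((μ / ε) * (t - s)) * Real.exp K * Real.exp (c * t)) * (N / (ε * c)) := by
        field_simp
    _ = N / (ε * c) := by rw [this, one_mul]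
    _ = N / (γ₂ - μ) := by
        rw [hc_def]
        congr 1
        field_simp
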